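/- arXiv:1409.2057 — 5 statements merged into one kernel-verified Lean document; each statement's English description precedes it below -/
import Mathlib

section
/- The number D^M_n of perfect matchings of K_{2n} that share no edge with a fixed perfect matching satisfies the recurrence D^M_n = 2(n-1)(D^M_{n-1} + D^M_{n-2}) with D^M_0 = 1 and D^M_1 = 0. -/
/-- A perfect matching of `K_{2n}` viewed as a fixed-point-free involution of the
vertex set `Fin (2*n)`. -/
def IsPM {N : ℕ} (f : Equiv.Perm (Fin N)) : Prop :=
  Function.Involutive f ∧ ∀ i, f i ≠ i

/-- The number of perfect matchings of `K_{2n}` sharing no edge with the fixed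
perfect matching `e` (note that `m` and `e` share an edge iff `m i = e i` for some `i`). -/
noncomputable def DM (n : ℕ) (e : Equiv.Perm (Fin (2 * n))) : ℕ :=
  Nat.card {m : Equiv.Perm (Fin (2 * n)) // IsPM m ∧ ∀ i, m i ≠ e i}

/-!
Fix a vertex `v`. A derangement `m` of `e` sends `v` to one of the `2n - 2` vertices
`u ∉ {v, e v}`. Let `w` be `e` with its edges `{v, e v}`, `{u, e u}` traded for `{v, u}`,
`{e v, e u}`. Then `m` deranges `e` and contains `{v, u}` iff it agrees with `w` exactly on
`{v, u, e v, e u}` or exactly on `{v, u}`; deleting those vertices, such `m` correspond to the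
derangements of the restriction of `w` to the remaining `2n - 4`, resp. `2n - 2` vertices. The
number of derangements of a perfect matching depends only on the number of vertices, since any two
perfect matchings on the same vertex set are conjugate.
-/

open Function Equiv

theorem Fintype.card_subtype_notMem {α : Type*} [Fintype α] [DecidableEq α] (s : Finset α) :
    Fintype.card {x // x ∉ s} = Fintype.card α - s.card := by
  rw [Fintype.card_subtype_compl, Fintype.card_coe]

namespace Equiv.Perm

variable {α β : Type*}

def IsPerfectMatching (m : Perm α) : Prop :=
  Involutive m ∧ ∀ x, m x ≠ x

def matchingDerangements (e : Perm α) : Set (Perm α) :=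
  {m | m.IsPerfectMatching ∧ ∀ x, m x ≠ e x}

theorem _root_.Function.Involutive.apply_mem_iff {f : α → α} (hf : Involutive f) {s : Finset α}
    (hs : ∀ x ∈ s, f x ∈ s) (x : α) : f x ∈ s ↔ x ∈ s :=
  ⟨fun hx => hf x ▸ hs _ hx, hs x⟩

namespace IsPerfectMatching

theorem permCongr {m : Perm α} (hm : m.IsPerfectMatching) (b : α ≃ β) :
    (b.permCongr m).IsPerfectMatching :=
  ⟨fun x => by simp [permCongr_apply, hm.1 (b.symm x)],
    fun x h => hm.2 (b.symm x) (by simpa [permCongr_apply] using congrArg b.symm h)⟩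

theorem subtypePerm {p : α → Prop} {m : Perm α} (hm : m.IsPerfectMatching)
    (h : ∀ x, p (m x) ↔ p x) : (m.subtypePerm h).IsPerfectMatching :=
  ⟨fun x => Subtype.ext (hm.1 x), fun x hx => hm.2 x (congrArg Subtype.val hx)⟩

theorem subtypeCongr {p : α → Prop} [DecidablePred p] {ep : Perm {x // p x}}
    {en : Perm {x // ¬p x}} (hp : ep.IsPerfectMatching) (hn : en.IsPerfectMatching) :
    (ep.subtypeCongr en).IsPerfectMatching := by
  constructor
  · intro x
    by_cases hx : p x
    · rw [subtypeCongr.left_apply _ _ hx, subtypeCongr.left_apply_subtype, hp.1]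
    · rw [subtypeCongr.right_apply _ _ hx, subtypeCongr.right_apply_subtype, hn.1]
  · intro x
    by_cases hx : p x
    · rw [subtypeCongr.left_apply _ _ hx]
      exact fun h => hp.2 _ (Subtype.ext h)
    · rw [subtypeCongr.right_apply _ _ hx]
      exact fun h => hn.2 _ (Subtype.ext h)

theorem cycleType [Fintype α] [DecidableEq α] {m : Perm α} (hm : m.IsPerfectMatching) :
    m.cycleType = Multiset.replicate (Fintype.card α / 2) 2 := by
  have hsq : m ^ 2 = 1 := by ext x; simp [sq, hm.1 x]
  have hsupp : m.support = Finset.univ := by ext x; simp [hm.2 x]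
  have hsum := m.sum_cycleType
  rw [cycleType_of_pow_prime_eq_one hsq] at hsum ⊢
  rw [Multiset.sum_replicate, hsupp, Finset.card_univ, smul_eq_mul] at hsum
  rw [← hsum, Nat.mul_div_cancel _ two_pos]

theorem isConj [Fintype α] [DecidableEq α] {m m' : Perm α} (hm : m.IsPerfectMatching)
    (hm' : m'.IsPerfectMatching) : IsConj m m' :=
  isConj_of_cycleType_eq (by rw [hm.cycleType, hm'.cycleType])

end IsPerfectMatching

theorem isPerfectMatching_permCongr_iff {m : Perm α} (b : α ≃ β) :
    (b.permCongr m).IsPerfectMatching ↔ m.IsPerfectMatching :=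
  ⟨fun h => by simpa only [← permCongr_symm, symm_apply_apply] using h.permCongr b.symm,
    fun h => h.permCongr b⟩

theorem card_matchingDerangements_permCongr (b : α ≃ β) (e : Perm α) :
    Nat.card (matchingDerangements (b.permCongr e)) = Nat.card (matchingDerangements e) :=
  Nat.card_congr <| .symm <| b.permCongr.subtypeEquiv fun m => by
    simp [matchingDerangements, isPerfectMatching_permCongr_iff, permCongr_apply,
      b.symm.surjective.forall]

theorem card_matchingDerangements_eq_of_card_eq [Fintype α] [Fintype β] {e : Perm α}
    {e' : Perm β} (he : e.IsPerfectMatching) (he' : e'.IsPerfectMatching)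
    (h : Fintype.card α = Fintype.card β) :
    Nat.card (matchingDerangements e) = Nat.card (matchingDerangements e') := by
  classical
  obtain ⟨b⟩ := Fintype.card_eq.mp h
  obtain ⟨σ, rfl⟩ := isConj_iff.mp ((he.permCongr b).isConj he')
  rw [← permCongr_eq_mul, card_matchingDerangements_permCongr,
    card_matchingDerangements_permCongr]

theorem card_matchingDerangements_of_isEmpty [IsEmpty α] (e : Perm α) :
    Nat.card (matchingDerangements e) = 1 :=
  Nat.card_eq_one_iff_unique.mpr
    ⟨inferInstance, ⟨⟨1, ⟨isEmptyElim, isEmptyElim⟩, isEmptyElim⟩⟩⟩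

def matchingsAgreeingExactlyOn (σ : Perm α) (s : Finset α) : Set (Perm α) :=
  {m | m.IsPerfectMatching ∧ ∀ x, m x = σ x ↔ x ∈ s}

/-- Such a matching contains exactly the edges of `σ` inside `s`, so it is determined by its
restriction to the complement of `s`, which deranges `σ` there. -/
theorem card_matchingsAgreeingExactlyOn [DecidableEq α] {σ : Perm α}
    (hσ : σ.IsPerfectMatching) {s : Finset α} (hs : ∀ x ∈ s, σ x ∈ s)
    (σ' : Perm {x // x ∉ s}) (hσ' : ∀ x, (σ' x : α) = σ x) :
    Nat.card (matchingsAgreeingExactlyOn σ s) = Nat.card (matchingDerangements σ') := by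
  have hσs : ∀ x, σ x ∈ s ↔ x ∈ s := hσ.1.apply_mem_iff hs
  have hms (m : Perm α) (hm : m ∈ matchingsAgreeingExactlyOn σ s) (x : α) :
      m x ∉ s ↔ x ∉ s := by
    refine not_congr (hm.1.1.apply_mem_iff (fun y hy => ?_) x)
    rw [(hm.2 y).2 hy]
    exact hs y hy
  refine Nat.card_congr
    { toFun := fun m => ⟨m.1.subtypePerm (hms m.1 m.2), m.2.1.subtypePerm _,
        fun x h => x.2 ((m.2.2 x).1 (by rw [← hσ' x]; exact congrArg Subtype.val h))⟩
      invFun := fun m' => ⟨(σ.subtypePerm hσs).subtypeCongr m'.1,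
        (hσ.subtypePerm hσs).subtypeCongr m'.2.1, fun x => ?_⟩
      left_inv := fun m => ?_
      right_inv := fun m' => ?_ }
  · by_cases hx : x ∈ s
    · simp [subtypeCongr.left_apply _ _ hx, hx]
    · rw [subtypeCongr.right_apply _ _ hx, ← hσ' ⟨x, hx⟩]
      simpa [hx, Subtype.ext_iff] using m'.2.2 ⟨x, hx⟩
  · ext x
    by_cases hx : x ∈ s
    · simp [subtypeCongr.left_apply _ _ hx, ((m.2.2 x).2 hx).symm]
    · simp [subtypeCongr.right_apply _ _ hx]
  · ext x
    simp [subtypeCongr.right_apply_subtype]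

section Recurrence

variable [DecidableEq α] {e : Perm α} {v u : α}

/-- Trades the edges `{v, e v}`, `{u, e u}` of `e` for `{v, u}`, `{e v, e u}`. -/
def twoSwitch (e : Perm α) (v u : α) : Perm α :=
  (swap v (e u)).permCongr e

theorem IsPerfectMatching.twoSwitch (he : e.IsPerfectMatching) :
    (twoSwitch e v u).IsPerfectMatching :=
  he.permCongr _

theorem twoSwitch_apply_left (he : e.IsPerfectMatching) (huv : u ≠ v) :
    twoSwitch e v u v = u := by
  simp [twoSwitch, he.1 u, swap_apply_of_ne_of_ne huv (he.2 u).symm]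

theorem twoSwitch_apply_right (he : e.IsPerfectMatching) (huv : u ≠ v) :
    twoSwitch e v u u = v := by
  simp [twoSwitch, swap_apply_of_ne_of_ne huv (he.2 u).symm]

theorem twoSwitch_apply_apply_left (he : e.IsPerfectMatching) (huv : u ≠ v) :
    twoSwitch e v u (e v) = e u := by
  simp [twoSwitch, he.1 v, swap_apply_of_ne_of_ne (he.2 v) (e.injective.ne huv.symm)]

theorem twoSwitch_apply_apply_right (he : e.IsPerfectMatching) (huv : u ≠ v) :
    twoSwitch e v u (e u) = e v := by
  simp [twoSwitch, swap_apply_of_ne_of_ne (he.2 v) (e.injective.ne huv.symm)]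

theorem twoSwitch_apply_of_ne (he : e.IsPerfectMatching) {x : α} (hxv : x ≠ v) (hxu : x ≠ u)
    (hxev : x ≠ e v) (hxeu : x ≠ e u) : twoSwitch e v u x = e x := by
  simp only [twoSwitch, permCongr_apply, symm_swap]
  rw [swap_apply_of_ne_of_ne hxv hxeu, swap_apply_of_ne_of_ne]
  · exact fun h => hxev (by rw [← h, he.1 x])
  · exact e.injective.ne hxu

theorem matchingDerangements_inter_setOf_apply_eq (he : e.IsPerfectMatching) (huv : u ≠ v)
    (huev : u ≠ e v) :
    matchingDerangements e ∩ {m | m v = u} =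
      matchingsAgreeingExactlyOn (twoSwitch e v u) {v, u, e v, e u} ∪
        matchingsAgreeingExactlyOn (twoSwitch e v u) {v, u} := by
  have hv := twoSwitch_apply_left he huv
  have hu := twoSwitch_apply_right he huv
  have hev := twoSwitch_apply_apply_left he huv
  have heu := twoSwitch_apply_apply_right he huv
  have hother := fun x => twoSwitch_apply_of_ne (v := v) (u := u) (x := x) he
  have heuv : e u ≠ v := fun h => huev (by rw [← h, he.1 u])
  have hevu : e v ≠ e u := e.injective.ne huv.symm
  have := he.1 u
  have := he.1 v
  have hcases : ∀ x, x = v ∨ x = u ∨ x = e v ∨ x = e u ∨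
      (x ≠ v ∧ x ≠ u ∧ x ≠ e v ∧ x ≠ e u) := by tauto
  ext m
  simp only [matchingDerangements, matchingsAgreeingExactlyOn, Set.mem_inter_iff,
    Set.mem_union, Set.mem_ofPred_eq]
  by_cases hm : m.IsPerfectMatching
  · have := hm.1 v
    have := hm.1 u
    have := hm.1 (e v)
    have := hm.1 (e u)
    constructor
    · rintro ⟨⟨-, hder⟩, hmv⟩
      by_cases hab : m (e v) = e u
      exacts [Or.inl ⟨hm, fun x => by have := hcases x; grind⟩,
        Or.inr ⟨hm, fun x => by have := hcases x; grind⟩]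
    · rintro (⟨-, hag⟩ | ⟨-, hag⟩) <;>
        exact ⟨⟨hm, fun x => by have := hcases x; grind⟩, by grind⟩
  · simp [hm]

theorem card_matchingDerangements_inter_setOf_apply_eq [Fintype α] {β₁ β₂ : Type*}
    [Fintype β₁] [Fintype β₂] (he : e.IsPerfectMatching) (huv : u ≠ v) (huev : u ≠ e v)
    {e₁ : Perm β₁} {e₂ : Perm β₂} (he₁ : e₁.IsPerfectMatching) (he₂ : e₂.IsPerfectMatching)
    (h₁ : Fintype.card β₁ + 2 = Fintype.card α) (h₂ : Fintype.card β₂ + 4 = Fintype.card α) :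
    Nat.card ↥(matchingDerangements e ∩ {m | m v = u}) =
      Nat.card (matchingDerangements e₁) + Nat.card (matchingDerangements e₂) := by
  classical
  set w := twoSwitch e v u
  have hw : w.IsPerfectMatching := he.twoSwitch
  have heuv : e u ≠ v := fun h => huev (by rw [← h, he.1 u])
  have hs₄ : ∀ x ∈ ({v, u, e v, e u} : Finset α), w x ∈ ({v, u, e v, e u} : Finset α) := by
    simp [w, twoSwitch_apply_left he huv, twoSwitch_apply_right he huv,
      twoSwitch_apply_apply_left he huv, twoSwitch_apply_apply_right he huv]
  have hs₂ : ∀ x ∈ ({v, u} : Finset α), w x ∈ ({v, u} : Finset α) := by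
    simp [w, twoSwitch_apply_left he huv, twoSwitch_apply_right he huv]
  have hcard₄ : ({v, u, e v, e u} : Finset α).card = 4 := by
    rw [Finset.card_insert_of_notMem, Finset.card_insert_of_notMem, Finset.card_pair]
    · exact e.injective.ne huv.symm
    · simp [huev, (he.2 u).symm]
    · simp [huv.symm, (he.2 v).symm, heuv.symm]
  have hcard₂ : ({v, u} : Finset α).card = 2 := Finset.card_pair huv.symm
  have hdisj : _root_.Disjoint (matchingsAgreeingExactlyOn w {v, u, e v, e u})
      (matchingsAgreeingExactlyOn w {v, u}) := by
    refine Set.disjoint_left.mpr fun m h₄ h₂ => ?_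
    have := (h₂.2 (e v)).1 ((h₄.2 (e v)).2 (by simp))
    simp [he.2 v, huev.symm] at this
  rw [matchingDerangements_inter_setOf_apply_eq he huv huev,
    Nat.card_congr (Equiv.Set.union hdisj), Nat.card_sum,
    card_matchingsAgreeingExactlyOn hw hs₄
      (w.subtypePerm fun x => not_congr (hw.1.apply_mem_iff hs₄ x)) fun _ => rfl,
    card_matchingsAgreeingExactlyOn hw hs₂
      (w.subtypePerm fun x => not_congr (hw.1.apply_mem_iff hs₂ x)) fun _ => rfl,
    add_comm (Nat.card (matchingDerangements e₁))]
  congr 1 <;> apply card_matchingDerangements_eq_of_card_eq (hw.subtypePerm _) ‹_› <;>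
    rw [Fintype.card_subtype_notMem] <;> omega

theorem card_matchingDerangements_eq_sum [Fintype α] (v : α) :
    Nat.card (matchingDerangements e) = ∑ u : {u // u ∉ ({v, e v} : Finset α)},
      Nat.card ↥(matchingDerangements e ∩ {m | m v = u}) := by
  rw [← Nat.card_sigma]
  let f : matchingDerangements e → {u // u ∉ ({v, e v} : Finset α)} :=
    fun m => ⟨m.1 v, by simp [m.2.1.2 v, m.2.2 v]⟩
  exact Nat.card_congr <| (Equiv.sigmaFiberEquiv f).symm.trans <| Equiv.sigmaCongrRight fun u =>
    (Equiv.subtypeEquivRight fun m => Subtype.ext_iff).trans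
      (Equiv.subtypeSubtypeEquivSubtypeInter _ (fun m : Perm α => m v = u))

theorem card_matchingDerangements_of_card_eq_two [Fintype α] (he : e.IsPerfectMatching)
    (h : Fintype.card α = 2) : Nat.card (matchingDerangements e) = 0 := by
  obtain ⟨v⟩ : Nonempty α := Fintype.card_pos_iff.mp (by omega)
  have : IsEmpty {u // u ∉ ({v, e v} : Finset α)} := Fintype.card_eq_zero_iff.mp <| by
    rw [Fintype.card_subtype_notMem, Finset.card_pair (he.2 v).symm, h]
  rw [card_matchingDerangements_eq_sum v, Finset.univ_eq_empty, Finset.sum_empty]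

theorem card_matchingDerangements_recurrence [Fintype α] {β₁ β₂ : Type*} [Fintype β₁]
    [Fintype β₂] {e₁ : Perm β₁} {e₂ : Perm β₂} (he : e.IsPerfectMatching)
    (he₁ : e₁.IsPerfectMatching) (he₂ : e₂.IsPerfectMatching)
    (h₁ : Fintype.card β₁ + 2 = Fintype.card α) (h₂ : Fintype.card β₂ + 4 = Fintype.card α) :
    Nat.card (matchingDerangements e) = (Fintype.card α - 2) *
      (Nat.card (matchingDerangements e₁) + Nat.card (matchingDerangements e₂)) := by
  obtain ⟨v⟩ : Nonempty α := Fintype.card_pos_iff.mp (by omega)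
  have hfiber (u : {u // u ∉ ({v, e v} : Finset α)}) :
      Nat.card ↥(matchingDerangements e ∩ {m | m v = u}) =
        Nat.card (matchingDerangements e₁) + Nat.card (matchingDerangements e₂) := by
    obtain ⟨u, hu⟩ := u
    simp only [Finset.mem_insert, Finset.mem_singleton, not_or] at hu
    exact card_matchingDerangements_inter_setOf_apply_eq he hu.1 hu.2 he₁ he₂ h₁ h₂
  rw [card_matchingDerangements_eq_sum v, Finset.sum_congr rfl fun u _ => hfiber u,
    Finset.sum_const, Finset.card_univ, Fintype.card_subtype_notMem,
    Finset.card_pair (he.2 v).symm, smul_eq_mul]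

end Recurrence

end Equiv.Perm

/-- The number of perfect matchings of `K_{2n}` deranging a fixed perfect matching
satisfies `D^M_0 = 1`, `D^M_1 = 0` and `D^M_n = 2(n-1)(D^M_{n-1} + D^M_{n-2})`. -/
theorem matching_derangement_recurrence :
    (∀ e : Equiv.Perm (Fin (2 * 0)), DM 0 e = 1) ∧
    (∀ e : Equiv.Perm (Fin (2 * 1)), IsPM e → DM 1 e = 0) ∧
    (∀ n : ℕ, 2 ≤ n →
      ∀ (e : Equiv.Perm (Fin (2 * n))) (e₁ : Equiv.Perm (Fin (2 * (n - 1))))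
        (e₂ : Equiv.Perm (Fin (2 * (n - 2)))),
        IsPM e → IsPM e₁ → IsPM e₂ →
        DM n e = 2 * (n - 1) * (DM (n - 1) e₁ + DM (n - 2) e₂)) := by
  have : IsEmpty (Fin (2 * 0)) := Fin.isEmpty'
  refine ⟨fun e => Perm.card_matchingDerangements_of_isEmpty e,
    fun e he => Perm.card_matchingDerangements_of_card_eq_two he (Fintype.card_fin _), ?_⟩
  intro n hn e e₁ e₂ he he₁ he₂
  have h := Perm.card_matchingDerangements_recurrence he he₁ he₂
    (by simp only [Fintype.card_fin]; omega) (by simp only [Fintype.card_fin]; omega)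
  rwa [Fintype.card_fin, show 2 * n - 2 = 2 * (n - 1) by omega] at h
end

section
/- The chromatic number of the matching derangement graph on perfect matchings of K_{2n} equals 2n-1. -/
/-- The set of perfect matchings of `K_{2n}`. -/
abbrev PMV (n : ℕ) := {f : Equiv.Perm (Fin (2 * n)) // IsPM f}

/-- The matching derangement graph: vertices are the perfect matchings of `K_{2n}`,
two matchings being adjacent iff they share no edge. -/
def MDG (n : ℕ) : SimpleGraph (PMV n) where
  Adj m m' := m ≠ m' ∧ ∀ i, m.1 i ≠ m'.1 i
  symm := by
    refine ⟨?_⟩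
    intro m m' h
    exact ⟨h.1.symm, fun i => (h.2 i).symm⟩
  loopless := ⟨fun m h => h.1 rfl⟩

open Function SimpleGraph

section RoundRobin

variable {R : Type*} [CommRing R] [DecidableEq R]

def roundRobin (r : R) : Option R → Option R
  | none => some r
  | some i => if i = r then none else some (2 * r - i)

theorem roundRobin_involutive (r : R) : Involutive (roundRobin r) := by
  rintro (_ | i)
  · simp [roundRobin]
  · by_cases hi : i = r
    · simp [roundRobin, hi]
    · have : 2 * r - i ≠ r := fun h => hi (by linear_combination -h)
      simp [roundRobin, hi, this]

theorem roundRobin_ne_self (h2 : IsUnit (2 : R)) (r : R) (x : Option R) : roundRobin r x ≠ x := by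
  rcases x with _ | i
  · simp [roundRobin]
  · by_cases hi : i = r
    · simp [roundRobin, hi]
    · intro h
      refine hi (sub_eq_zero.mp (h2.mul_right_eq_zero.mp ?_)).symm
      simp only [roundRobin, hi, if_false, Option.some.injEq] at h
      linear_combination h

theorem roundRobin_ne_of_ne (h2 : IsUnit (2 : R)) {r s : R} (hrs : r ≠ s) (x : Option R) :
    roundRobin r x ≠ roundRobin s x := by
  rcases x with _ | i
  · simpa [roundRobin] using hrs
  · by_cases hir : i = r
    · subst hir; simp [roundRobin, hrs]
    by_cases his : i = s
    · subst his; simp [roundRobin, hrs.symm]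
    intro h
    refine hrs (sub_eq_zero.mp (h2.mul_right_eq_zero.mp ?_))
    simp only [roundRobin, hir, his, if_false, Option.some.injEq] at h
    linear_combination h

end RoundRobin

theorem isPM_permCongr {α : Type*} {N : ℕ} (e : α ≃ Fin N) {f : Equiv.Perm α}
    (hf : Involutive f) (hfix : ∀ x, f x ≠ x) : IsPM (e.permCongr f) :=
  ⟨fun i => by simp [Equiv.permCongr_apply, hf _],
    fun i h => hfix (e.symm i) (by simpa [Equiv.permCongr_apply, ← e.eq_symm_apply] using h)⟩

namespace MDG

variable {n : ℕ}

def partnerColoring (i : Fin (2 * n)) : (MDG n).Coloring {j // j ≠ i} :=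
  Coloring.mk (fun m => ⟨m.1 i, m.2.2 i⟩) fun hadj heq => hadj.2 i (congrArg Subtype.val heq)

theorem colorable (hn : 1 ≤ n) : (MDG n).Colorable (2 * n - 1) := by
  have := (partnerColoring (⟨0, by omega⟩ : Fin (2 * n))).colorable
  rwa [Fintype.card_subtype_compl, Fintype.card_fin, Fintype.card_unique] at this

variable {R : Type*} [CommRing R] [DecidableEq R]

def roundRobinHom (h2 : IsUnit (2 : R)) (e : Option R ≃ Fin (2 * n)) :
    (⊤ : SimpleGraph R) →g MDG n where
  toFun r := ⟨e.permCongr (roundRobin_involutive r).toPerm,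
    isPM_permCongr e (roundRobin_involutive r) (roundRobin_ne_self h2 r)⟩
  map_rel' {r s} hrs := by
    have hdisj : ∀ i, roundRobin r (e.symm i) ≠ roundRobin s (e.symm i) :=
      fun i => roundRobin_ne_of_ne h2 hrs _
    refine ⟨fun h => hdisj (e none) ?_, fun i h => hdisj i ?_⟩
    · simpa [Equiv.permCongr_apply] using congrArg (fun m : PMV n => e.symm (m.1 (e none))) h
    · simpa [Equiv.permCongr_apply] using h

theorem card_le_chromaticNumber [Fintype R] (h2 : IsUnit (2 : R)) (e : Option R ≃ Fin (2 * n)) :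
    (Fintype.card R : ℕ∞) ≤ (MDG n).chromaticNumber :=
  chromaticNumber_top (V := R) ▸ chromaticNumber_mono_of_hom (roundRobinHom h2 e)

end MDG

/-- The chromatic number of the matching derangement graph on the perfect matchings
of `K_{2n}` equals `2n - 1`. -/
theorem chromaticNumber_MDG (n : ℕ) (hn : 1 ≤ n) :
    (MDG n).chromaticNumber = (2 * n - 1 : ℕ) := by
  have : NeZero (2 * n - 1) := ⟨by omega⟩
  have h2 : IsUnit (2 : ZMod (2 * n - 1)) := by
    exact_mod_cast (ZMod.isUnit_iff_coprime 2 (2 * n - 1)).mpr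
      (Nat.coprime_two_left.mpr ⟨n - 1, by omega⟩)
  have e : Option (ZMod (2 * n - 1)) ≃ Fin (2 * n) :=
    Fintype.equivOfCardEq (by simp [ZMod.card]; omega)
  refine le_antisymm (MDG.colorable hn).chromaticNumber_le ?_
  simpa [ZMod.card] using MDG.card_le_chromaticNumber h2 e
end

section
/- For a k-regular graph Γ on n vertices with smallest adjacency eigenvalue η < 0, every independent set S satisfies |S| ≤ n·(-η)/(k - η). -/
/-!
Let `α = |S|` and test the Rayleigh quotient of the adjacency matrix `A` on `x = n·1_S - α·1`.
Since `S` is independent, `1_Sᵀ A 1_S = 0`, and regularity gives `A 1 = k 1`, so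
`xᵀ A x = -k n α²` while `xᵀ x = n α (n - α)`. The bound `η xᵀx ≤ xᵀ A x` then reads
`η (n - α) ≤ -k α`, which rearranges to the ratio bound.
-/

open Matrix Finset

namespace Matrix.IsHermitian

variable {n : Type*} [Fintype n] [DecidableEq n] {A : Matrix n n ℝ}

theorem posSemidef_sub_smul_one (hA : A.IsHermitian) {η : ℝ}
    (h : ∀ μ ∈ spectrum ℝ A, η ≤ μ) : (A - η • 1).PosSemidef := by
  refine posSemidef_iff_isHermitian_and_spectrum_nonneg.mpr
    ⟨hA.sub (by simp [IsHermitian]), fun μ hμ => ?_⟩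
  rw [← Algebra.algebraMap_eq_smul_one, ← spectrum.sub_singleton_eq] at hμ
  obtain ⟨ν, hν, η', rfl, rfl⟩ := hμ
  exact sub_nonneg.mpr (h ν hν)

theorem mul_dotProduct_self_le (hA : A.IsHermitian) {η : ℝ}
    (h : ∀ μ ∈ spectrum ℝ A, η ≤ μ) (x : n → ℝ) : η * (x ⬝ᵥ x) ≤ x ⬝ᵥ A *ᵥ x := by
  have := (hA.posSemidef_sub_smul_one h).dotProduct_mulVec_nonneg x
  simpa [sub_mulVec, smul_mulVec, dotProduct_sub] using this

end Matrix.IsHermitian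

namespace SimpleGraph

variable {V : Type*} [Fintype V] {G : SimpleGraph V} [DecidableRel G.Adj]

theorem IsIndepSet.indicator_dotProduct_adjMatrix_mulVec_indicator {R : Type*}
    [NonAssocSemiring R] {s : Set V} (hs : G.IsIndepSet s) :
    s.indicator 1 ⬝ᵥ G.adjMatrix R *ᵥ s.indicator 1 = 0 := by
  rw [dotProduct_mulVec_adjMatrix]
  refine Finset.sum_eq_zero fun u _ => Finset.sum_eq_zero fun v _ => ?_
  split_ifs with huv
  · by_cases hu : u ∈ s <;> by_cases hv : v ∈ s
    · exact absurd huv (hs hu hv huv.ne)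
    all_goals simp [hu, hv]
  · rfl

theorem IsRegularOfDegree.adjMatrix_mulVec_one {R : Type*} [NonAssocSemiring R] {k : ℕ}
    (hreg : G.IsRegularOfDegree k) : G.adjMatrix R *ᵥ 1 = (k : R) • 1 := by
  ext v
  simpa using adjMatrix_mulVec_const_apply_of_regular (α := R) (a := 1) hreg (v := v)

theorem IsRegularOfDegree.one_dotProduct_adjMatrix_mulVec {R : Type*} [CommSemiring R] {k : ℕ}
    (hreg : G.IsRegularOfDegree k) (x : V → R) : 1 ⬝ᵥ G.adjMatrix R *ᵥ x = k * (1 ⬝ᵥ x) := by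
  rw [dotProduct_mulVec, ← mulVec_transpose, transpose_adjMatrix, hreg.adjMatrix_mulVec_one,
    smul_dotProduct, smul_eq_mul]

theorem IsIndepSet.card_mul_sub_le {k : ℕ} (hreg : G.IsRegularOfDegree k) {η : ℝ} (hη₀ : η ≤ 0)
    (hη : ∀ x : V → ℝ, η * (x ⬝ᵥ x) ≤ x ⬝ᵥ G.adjMatrix ℝ *ᵥ x) {s : Finset V}
    (hs : G.IsIndepSet s) : (#s : ℝ) * (k - η) ≤ -η * Fintype.card V := by
  set e : V → ℝ := (s : Set V).indicator 1
  have hee : e ⬝ᵥ e = #s := by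
    simp [e, dotProduct, ← Set.indicator_mul, sum_indicator_subset _ s.subset_univ]
  have h1e : 1 ⬝ᵥ e = #s := by simp [e, dotProduct, sum_indicator_subset _ s.subset_univ]
  have h11 : (1 : V → ℝ) ⬝ᵥ 1 = Fintype.card V := by simp
  have hAe : e ⬝ᵥ G.adjMatrix ℝ *ᵥ e = 0 := hs.indicator_dotProduct_adjMatrix_mulVec_indicator
  have key := hη ((Fintype.card V : ℝ) • e - (#s : ℝ) • 1)
  simp only [sub_dotProduct, dotProduct_sub, smul_dotProduct, dotProduct_smul, mulVec_sub,
    mulVec_smul, smul_eq_mul, dotProduct_comm e 1, hreg.adjMatrix_mulVec_one, hee, h1e, h11,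
    hreg.one_dotProduct_adjMatrix_mulVec, hAe] at key
  have hsV : (#s : ℝ) ≤ Fintype.card V := by exact_mod_cast s.card_le_univ
  have hs₀ : (0 : ℝ) ≤ #s := (#s).cast_nonneg
  generalize (#s : ℝ) = α at key hsV hs₀ ⊢
  generalize (Fintype.card V : ℝ) = n at key hsV ⊢
  rcases hs₀.eq_or_lt with rfl | hα
  · simpa using mul_nonneg (neg_nonneg.mpr hη₀) hsV
  have : η * (n - α) + k * α ≤ 0 :=
    le_of_mul_le_mul_left (by linear_combination key) (mul_pos (hα.trans_le hsV) hα)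
  linarith

end SimpleGraph

theorem ratio_bound_general {V : Type} [Fintype V] [DecidableEq V]
    (G : SimpleGraph V) [DecidableRel G.Adj] (k : ℕ) (hreg : G.IsRegularOfDegree k)
    (η : ℝ) (hmin : ∀ μ ∈ spectrum ℝ (G.adjMatrix ℝ), η ≤ μ) (hneg : η < 0)
    (s : Finset V) (hs : ∀ u ∈ s, ∀ v ∈ s, ¬ G.Adj u v) :
    (s.card : ℝ) ≤ (Fintype.card V : ℝ) * (-η) / ((k : ℝ) - η) := by
  have hkη : 0 < (k : ℝ) - η := by linarith [k.cast_nonneg (α := ℝ)]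
  rw [le_div_iff₀ hkη, mul_comm _ (-η)]
  exact SimpleGraph.IsIndepSet.card_mul_sub_le hreg hneg.le
    ((G.isHermitian_adjMatrix ℝ).mul_dotProduct_self_le hmin) fun u hu v hv _ => hs u hu v hv

/-- The Delsarte–Hoffman ratio bound: if `G` is a `k`-regular graph on a finite vertex
set `V` whose adjacency matrix has smallest eigenvalue `η < 0`, then every independent
set `s` of `G` satisfies `|s| ≤ |V| * (-η) / (k - η)`. -/
theorem ratio_bound {V : Type} [Fintype V] [DecidableEq V]
    (G : SimpleGraph V) [DecidableRel G.Adj] (k : ℕ) (hreg : G.IsRegularOfDegree k)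
    (η : ℝ) (hmem : η ∈ spectrum ℝ (G.adjMatrix ℝ))
    (hmin : ∀ μ ∈ spectrum ℝ (G.adjMatrix ℝ), η ≤ μ) (hneg : η < 0)
    (s : Finset V) (hs : ∀ u ∈ s, ∀ v ∈ s, ¬ G.Adj u v) :
    (s.card : ℝ) ≤ (Fintype.card V : ℝ) * (-η) / ((k : ℝ) - η) :=
  ratio_bound_general G k hreg η hmin hneg s hs
end

section
/- The collection of matrices {A_λ : λ ⊢ n}, where A_λ is the 01-matrix indexed by pairs of perfect matchings of K_{2n} with (A_λ)_{m,m'} = 1 iff the cycle type d(m,m') = λ, forms a symmetric commutative association scheme. -/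
/-!
Two fixed-point-free involutions `a, b` are determined up to simultaneous conjugation by the
cycle type of `c = a * b`. The involution `a` inverts `c`, and since neither `a` nor `b = a * c`
has a fixed point, `a` maps every cycle of `c` onto a different cycle. Choosing one cycle out of
each such pair gives a `c`-invariant set `H` with `α = H ⊔ a H`, on which `(a, c)` becomes
`(Sum.swap, p ⊕ p⁻¹)` on `H ⊕ H` for `p = c|_H`. The cycle type of `c` is twice that of `p`,
so equal cycle types give conjugate restrictions and hence conjugate pairs.

Hence each relation `d(m, m') = λ` is a single orbit of `S_{2n}` acting on pairs of perfect
matchings by conjugation, so the intersection numbers are well defined, and since `d` is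
symmetric the products `A_λ A_μ` are symmetric, which forces them to commute.
-/

open scoped Classical

/-- The cycle type `d(m,m')` of the union multigraph `m ∪ m'`, encoded as the cycle
type of the permutation `m * m'`: a cycle of length `2λᵢ` of the union multigraph
corresponds to two `λᵢ`-cycles of `m * m'` (with the parts `λᵢ = 1` becoming fixed
points).  This multiset determines and is determined by the partition `d(m,m') ⊢ n`. -/
noncomputable def dtype (n : ℕ) (m m' : PMV n) : Multiset ℕ :=
  (m.1 * m'.1).cycleType

/-- The `λ`-associate of the matching association scheme: the 01-matrix indexed by
pairs of perfect matchings of `K_{2n}` whose `(m,m')` entry is `1` iff `d(m,m') = μ`. -/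
noncomputable def Amat (n : ℕ) (μ : Multiset ℕ) : Matrix (PMV n) (PMV n) ℕ :=
  Matrix.of fun m m' => if dtype n m m' = μ then 1 else 0

/-- The index set: all cycle types realized by pairs of perfect matchings of `K_{2n}`. -/
noncomputable def dtypes (n : ℕ) : Finset (Multiset ℕ) :=
  Finset.image (fun p : PMV n × PMV n => dtype n p.1 p.2) Finset.univ


open Equiv Function

universe u

namespace Equiv.Perm

section CycleType

variable {α β γ : Type*} [Fintype α] [DecidableEq α] [Fintype β] [DecidableEq β]
  [Fintype γ] [DecidableEq γ]

theorem cycleType_eq_of_semiconj (e : β ≃ α) {p : Perm β} {q : Perm α}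
    (h : Semiconj e p q) : p.cycleType = q.cycleType := by
  have hq : q = p.extendDomain (e.trans (subtypeUnivEquiv fun _ => trivial).symm) := by
    ext x
    rw [extendDomain_apply_subtype _ _ trivial]
    simpa using (h (e.symm x)).symm
  rw [hq, cycleType_extendDomain]

theorem exists_semiconj_of_cycleType_eq (hcard : Fintype.card β = Fintype.card γ)
    {p : Perm β} {q : Perm γ} (h : p.cycleType = q.cycleType) :
    ∃ e : β ≃ γ, Semiconj e p q := by
  let f := Fintype.equivOfCardEq hcard
  have hf : p.cycleType = (f.permCongr p).cycleType :=
    cycleType_eq_of_semiconj f fun x => by simp [permCongr_apply]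
  obtain ⟨τ, hτ⟩ := isConj_iff.mp (isConj_iff_cycleType_eq.mpr (hf.symm.trans h))
  refine ⟨f.trans τ, fun x => ?_⟩
  simpa [permCongr_apply] using congrArg (· (τ (f x))) hτ

theorem cycleType_sumCongr (p : Perm β) (q : Perm γ) :
    (sumCongr p q).cycleType = p.cycleType + q.cycleType := by
  have hp : sumCongr p 1 = p.extendDomain (sumIsLeft (α := β) (β := γ)).symm := by
    ext (x | x)
    · exact (extendDomain_apply_image p (sumIsLeft (α := β) (β := γ)).symm x).symm
    · simp [extendDomain_apply_not_subtype]
  have hq : sumCongr 1 q = q.extendDomain (sumIsRight (α := β) (β := γ)).symm := by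
    ext (x | x)
    · simp [extendDomain_apply_not_subtype]
    · exact (extendDomain_apply_image q (sumIsRight (α := β) (β := γ)).symm x).symm
  have hdisj : Disjoint (sumCongr p 1) (sumCongr 1 q) := by
    rintro (x | x) <;> simp
  have hpq : sumCongr p q = sumCongr p 1 * sumCongr 1 q := by
    rw [sumCongr_mul, mul_one, one_mul]
  rw [hpq, hdisj.cycleType_mul, hp, hq, cycleType_extendDomain, cycleType_extendDomain]

theorem cycleType_eq_add_of_semiconj_sumCongr (Φ : β ⊕ β ≃ α) {p : Perm β} {c : Perm α}
    (hΦ : Semiconj Φ (sumCongr p p⁻¹) c) : c.cycleType = p.cycleType + p.cycleType := by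
  rw [← cycleType_eq_of_semiconj Φ hΦ, cycleType_sumCongr, cycleType_inv]

end CycleType

section InvolutionPairs

variable {α : Type u} {a b : Perm α}

theorem mul_self_eq_one_of_involutive (ha : Involutive a) : a * a = 1 :=
  Equiv.ext ha

theorem apply_zpow_mul_apply (ha : Involutive a) (hb : Involutive b) (i : ℤ) (x : α) :
    a (((a * b) ^ i) x) = ((a * b) ^ (-i)) (a x) := by
  have haa := mul_self_eq_one_of_involutive ha
  have hinv : a * (a * b) * a⁻¹ = (a * b)⁻¹ := by
    rw [mul_inv_rev, inv_eq_of_mul_eq_one_right haa,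
      inv_eq_of_mul_eq_one_right (mul_self_eq_one_of_involutive hb), ← mul_assoc, haa, one_mul]
  have h := conj_zpow (a := a) (b := a * b) (i := i)
  rw [hinv, inv_zpow'] at h
  rw [h]
  simp

theorem SameCycle.apply_of_involutive (ha : Involutive a) (hb : Involutive b) {x y : α}
    (h : (a * b).SameCycle x y) : (a * b).SameCycle (a x) (a y) := by
  obtain ⟨i, rfl⟩ := h
  exact ⟨-i, (apply_zpow_mul_apply ha hb i x).symm⟩

theorem not_sameCycle_apply_of_involutive (ha : Involutive a) (hb : Involutive b)
    (haf : ∀ x, a x ≠ x) (hbf : ∀ x, b x ≠ x) (x : α) : ¬ (a * b).SameCycle x (a x) := by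
  rintro ⟨i, hi⟩
  -- the midpoint `(a * b) ^ j x` of the path from `x` to `a x` is fixed by `a` or by `b`
  obtain ⟨j, rfl | rfl⟩ := Int.even_or_odd' i
  · apply haf (((a * b) ^ j) x)
    rw [apply_zpow_mul_apply ha hb, ← hi, ← mul_apply, ← zpow_add]
    congr 3
    ring
  · apply hbf (((a * b) ^ j) x)
    calc b (((a * b) ^ j) x) = a (((a * b) ^ (1 + j)) x) := by
          rw [zpow_one_add, mul_apply, mul_apply, ha]
      _ = ((a * b) ^ j) x := by
          rw [apply_zpow_mul_apply ha hb, ← hi, ← mul_apply, ← zpow_add]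
          congr 3
          ring

theorem exists_finset_transversal [Fintype α] {c : Perm α} (ha : Involutive a)
    (hsc : ∀ x y, c.SameCycle x y → c.SameCycle (a x) (a y))
    (hne : ∀ x, ¬ c.SameCycle x (a x)) :
    ∃ H : Finset α, (∀ x, c x ∈ H ↔ x ∈ H) ∧ ∀ x, a x ∈ H ↔ x ∉ H := by
  let key : α → Fin _ := fun x => Fintype.equivFin (Quotient (SameCycle.setoid c)) ⟦x⟧
  have key_eq : ∀ {x y}, c.SameCycle x y → key x = key y := fun h =>
    congrArg (Fintype.equivFin _) (Quotient.sound (s := SameCycle.setoid c) h)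
  have key_ne : ∀ x, key x ≠ key (a x) := fun x h =>
    hne x (Quotient.exact ((Fintype.equivFin _).injective h))
  refine ⟨Finset.univ.filter fun x => key x < key (a x), fun x => ?_, fun x => ?_⟩
  · have hx : c.SameCycle (c x) x := sameCycle_apply_left.2 (SameCycle.refl c x)
    simp only [Finset.mem_filter, Finset.mem_univ, true_and, key_eq hx, key_eq (hsc _ _ hx)]
  · simp only [Finset.mem_filter, Finset.mem_univ, true_and, ha x, not_lt]
    exact ⟨le_of_lt, fun h => lt_of_le_of_ne h (key_ne x).symm⟩

theorem exists_sumCongr_model [Fintype α] [DecidableEq α] (ha : Involutive a)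
    (hb : Involutive b) (haf : ∀ x, a x ≠ x) (hbf : ∀ x, b x ≠ x) :
    ∃ (β : Type u) (_ : Fintype β) (p : Perm β) (Φ : β ⊕ β ≃ α),
      Semiconj Φ Sum.swap a ∧ Semiconj Φ (sumCongr p p⁻¹) (a * b) := by
  obtain ⟨H, hcH, haH⟩ := exists_finset_transversal ha
    (fun _ _ => SameCycle.apply_of_involutive ha hb)
    (not_sameCycle_apply_of_involutive ha hb haf hbf)
  have hHa : ∀ x, x ∈ H ↔ ¬ a x ∈ H := fun x => by rw [haH, not_not]
  refine ⟨H, inferInstance, (a * b).subtypePerm hcH,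
    (Equiv.sumCongr (Equiv.refl _) (a.subtypeEquiv hHa)).trans (sumCompl (· ∈ H)), ?_, ?_⟩
  · rintro (⟨x, hx⟩ | ⟨x, hx⟩) <;> simp [ha x]
  · rintro (⟨x, hx⟩ | ⟨x, hx⟩) <;>
      simp [ha.symm_eq_self_of_involutive a, hb.symm_eq_self_of_involutive b]

theorem exists_semiconj_of_cycleType_mul_eq [Fintype α] [DecidableEq α] {a' b' : Perm α}
    (ha : Involutive a) (hb : Involutive b) (ha' : Involutive a') (hb' : Involutive b')
    (haf : ∀ x, a x ≠ x) (hbf : ∀ x, b x ≠ x) (haf' : ∀ x, a' x ≠ x) (hbf' : ∀ x, b' x ≠ x)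
    (h : (a * b).cycleType = (a' * b').cycleType) :
    ∃ σ : Perm α, Semiconj σ a a' ∧ Semiconj σ b b' := by
  classical
  obtain ⟨β, _, p, Φ, hΦa, hΦc⟩ := exists_sumCongr_model ha hb haf hbf
  obtain ⟨β', _, p', Φ', hΦa', hΦc'⟩ := exists_sumCongr_model ha' hb' haf' hbf'
  have hcycle : p.cycleType = p'.cycleType := by
    have h2 := (cycleType_eq_add_of_semiconj_sumCongr Φ hΦc).symm.trans
      (h.trans (cycleType_eq_add_of_semiconj_sumCongr Φ' hΦc'))
    ext k
    have := congrArg (Multiset.count k) h2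
    simp only [Multiset.count_add] at this
    omega
  have hcard : Fintype.card β = Fintype.card β' := by
    have h1 := Fintype.card_congr Φ
    have h2 := Fintype.card_congr Φ'
    rw [Fintype.card_sum] at h1 h2
    omega
  obtain ⟨e, he⟩ := exists_semiconj_of_cycleType_eq hcard hcycle
  have he' : Semiconj e ⇑p⁻¹ ⇑p'⁻¹ := he.inverses_right p.apply_symm_apply p'.symm_apply_apply
  let ρ : Perm α := Φ.symm.trans ((Equiv.sumCongr e e).trans Φ')
  have hρa : Semiconj ρ a a' := by
    refine ((hΦa.inverse_left Φ.left_inv Φ.right_inv).trans ?_).trans hΦa'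
    rintro (x | x) <;> rfl
  have hρc : Semiconj ρ (a * b) (a' * b') := by
    refine ((hΦc.inverse_left Φ.left_inv Φ.right_inv).trans ?_).trans hΦc'
    rintro (x | x)
    · exact congrArg Sum.inl (he x)
    · exact congrArg Sum.inr (he' x)
  refine ⟨ρ, hρa, fun x => ?_⟩
  simpa [ha (b x), ha' (b' (ρ x))] using (hρa.comp_right hρc) x

end InvolutionPairs

end Equiv.Perm

section FiberMatrix

open Finset

variable {X T : Type*} [DecidableEq T]

def fiberMatrix (d : X → X → T) (t : T) : Matrix X X ℕ :=
  Matrix.of fun x y => if d x y = t then 1 else 0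

def FibersAreOrbits (d : X → X → T) : Prop :=
  ∀ x z x' z', d x z = d x' z' →
    ∃ σ : X ≃ X, (∀ u v, d (σ u) (σ v) = d u v) ∧ σ x = x' ∧ σ z = z'

theorem fiberMatrix_isSymm {d : X → X → T} (hd : ∀ x y, d x y = d y x) (t : T) :
    (fiberMatrix d t).IsSymm :=
  Matrix.IsSymm.ext fun x y => by simp [fiberMatrix, hd x y]

theorem fiberMatrix_eq_one [DecidableEq X] {d : X → X → T} {t : T}
    (hd : ∀ x y, d x y = t ↔ x = y) : fiberMatrix d t = 1 := by
  ext x y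
  simp [fiberMatrix, Matrix.one_apply, hd]

variable [Fintype X]

theorem sum_fiberMatrix (d : X → X → T) :
    ∑ t ∈ univ.image (fun q : X × X => d q.1 q.2), fiberMatrix d t =
      Matrix.of fun _ _ => 1 := by
  ext x y
  simp [Matrix.sum_apply, fiberMatrix]

theorem fiberMatrix_mul_apply (d : X → X → T) (s t : T) (x z : X) :
    (fiberMatrix d s * fiberMatrix d t) x z = #{y | d x y = s ∧ d y z = t} := by
  simp only [Matrix.mul_apply, fiberMatrix, Matrix.of_apply, card_filter, ite_zero_mul_ite_zero,
    mul_one]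

theorem card_filter_fiber_map {d : X → X → T} (σ : X ≃ X) (hσ : ∀ u v, d (σ u) (σ v) = d u v)
    (s t : T) (x z : X) :
    #{y | d x y = s ∧ d y z = t} = #{y | d (σ x) y = s ∧ d y (σ z) = t} :=
  card_equiv σ fun y => by simp [hσ]

theorem FibersAreOrbits.exists_fiberMatrix_mul_eq_sum {d : X → X → T} (hd : FibersAreOrbits d)
    (s t : T) :
    ∃ p : T → ℕ, fiberMatrix d s * fiberMatrix d t =
      ∑ κ ∈ univ.image (fun q : X × X => d q.1 q.2), p κ • fiberMatrix d κ := by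
  refine ⟨fun κ => if h : ∃ q : X × X, d q.1 q.2 = κ then
    #{y | d h.choose.1 y = s ∧ d y h.choose.2 = t} else 0, ?_⟩
  ext x z
  have hxz : ∃ q : X × X, d q.1 q.2 = d x z := ⟨(x, z), rfl⟩
  obtain ⟨σ, hσ, hx, hz⟩ := hd _ _ _ _ hxz.choose_spec
  rw [fiberMatrix_mul_apply]
  simp only [Matrix.sum_apply, Matrix.smul_apply, fiberMatrix, Matrix.of_apply, smul_eq_mul,
    mul_ite, mul_one, mul_zero, sum_ite_eq,
    mem_image_of_mem (fun q : X × X => d q.1 q.2) (mem_univ (x, z)), if_true, dif_pos hxz]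
  have h := card_filter_fiber_map σ hσ s t hxz.choose.1 hxz.choose.2
  rw [hx, hz] at h
  exact h.symm

theorem Matrix.IsSymm.mul_comm {n R : Type*} [Fintype n] [CommSemiring R] {A B : Matrix n n R}
    (hA : A.IsSymm) (hB : B.IsSymm) (hAB : (A * B).IsSymm) : A * B = B * A := by
  rw [← hAB.eq, Matrix.transpose_mul, hA.eq, hB.eq]

theorem FibersAreOrbits.fiberMatrix_mul_comm {d : X → X → T} (hd : FibersAreOrbits d)
    (hsymm : ∀ x y, d x y = d y x) (s t : T) :
    fiberMatrix d s * fiberMatrix d t = fiberMatrix d t * fiberMatrix d s := by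
  obtain ⟨p, hp⟩ := hd.exists_fiberMatrix_mul_eq_sum s t
  refine (fiberMatrix_isSymm hsymm s).mul_comm (fiberMatrix_isSymm hsymm t) ?_
  rw [hp]
  exact sum_induction _ Matrix.IsSymm (fun _ _ => Matrix.IsSymm.add) Matrix.isSymm_zero
    fun κ _ => (fiberMatrix_isSymm hsymm κ).smul _

end FiberMatrix

section PerfectMatchings

theorem IsPM.conj {N : ℕ} {f : Perm (Fin N)} (hf : IsPM f) (σ : Perm (Fin N)) :
    IsPM (σ * f * σ⁻¹) :=
  ⟨fun x => by simp [hf.1 _], fun x h => hf.2 (σ⁻¹ x) (Perm.eq_inv_iff_eq.mpr h)⟩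

theorem IsPM.inv_eq {N : ℕ} {f : Perm (Fin N)} (hf : IsPM f) : f⁻¹ = f :=
  inv_eq_of_mul_eq_one_right (Perm.mul_self_eq_one_of_involutive hf.1)

variable {n : ℕ}

def conjPM (σ : Perm (Fin (2 * n))) : PMV n ≃ PMV n :=
  (MulAut.conj σ).toEquiv.subtypeEquiv fun f =>
    ⟨fun hf => hf.conj σ, fun hf => by simpa [mul_assoc] using hf.conj σ⁻¹⟩

@[simp]
theorem coe_conjPM (σ : Perm (Fin (2 * n))) (m : PMV n) :
    (conjPM σ m : Perm (Fin (2 * n))) = σ * m * σ⁻¹ :=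
  rfl

theorem Amat_eq_fiberMatrix (μ : Multiset ℕ) : Amat n μ = fiberMatrix (dtype n) μ :=
  rfl

theorem dtype_comm (m m' : PMV n) : dtype n m m' = dtype n m' m := by
  rw [dtype, dtype, ← Perm.cycleType_inv, mul_inv_rev, m.2.inv_eq, m'.2.inv_eq]

theorem dtype_eq_zero_iff (m m' : PMV n) : dtype n m m' = 0 ↔ m = m' := by
  rw [dtype, Perm.cycleType_eq_zero, mul_eq_one_iff_eq_inv, m'.2.inv_eq, Subtype.ext_iff]

theorem dtype_conjPM (σ : Perm (Fin (2 * n))) (m m' : PMV n) :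
    dtype n (conjPM σ m) (conjPM σ m') = dtype n m m' := by
  rw [dtype, dtype, coe_conjPM, coe_conjPM, conj_mul, Perm.cycleType_conj]

theorem exists_conjPM_of_dtype_eq {m₁ m₂ m₁' m₂' : PMV n}
    (h : dtype n m₁ m₂ = dtype n m₁' m₂') :
    ∃ σ, conjPM σ m₁ = m₁' ∧ conjPM σ m₂ = m₂' := by
  obtain ⟨σ, h₁, h₂⟩ := Perm.exists_semiconj_of_cycleType_mul_eq m₁.2.1 m₂.2.1 m₁'.2.1 m₂'.2.1
    m₁.2.2 m₂.2.2 m₁'.2.2 m₂'.2.2 h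
  refine ⟨σ, Subtype.ext (Equiv.ext fun x => ?_), Subtype.ext (Equiv.ext fun x => ?_)⟩
  · simpa using h₁ (σ⁻¹ x)
  · simpa using h₂ (σ⁻¹ x)

theorem fibersAreOrbits_dtype : FibersAreOrbits (dtype n) := by
  intro _ _ _ _ h
  obtain ⟨σ, hσ⟩ := exists_conjPM_of_dtype_eq h
  exact ⟨conjPM σ, dtype_conjPM σ, hσ⟩

end PerfectMatchings

/-- The matrices `A_λ` form a symmetric commutative association scheme: each `A_λ` is
symmetric, `A_{(1ⁿ)}` (here: the empty cycle type) is the identity, the `A_λ` sum to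
the all-ones matrix, products of associates are nonnegative integer combinations of
associates, and the associates pairwise commute. -/
theorem matching_association_scheme (n : ℕ) :
    (∀ μ, (Amat n μ).IsSymm) ∧
    (Amat n 0 = 1) ∧
    (∑ μ ∈ dtypes n, Amat n μ = Matrix.of fun _ _ => 1) ∧
    (∀ μ ν, ∃ p : Multiset ℕ → ℕ,
      Amat n μ * Amat n ν = ∑ κ ∈ dtypes n, p κ • Amat n κ) ∧
    (∀ μ ν, Amat n μ * Amat n ν = Amat n ν * Amat n μ) := by
  simp only [Amat_eq_fiberMatrix]
  exact ⟨fiberMatrix_isSymm dtype_comm, fiberMatrix_eq_one dtype_eq_zero_iff,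
    sum_fiberMatrix _, fibersAreOrbits_dtype.exists_fiberMatrix_mul_eq_sum,
    fibersAreOrbits_dtype.fiberMatrix_mul_comm dtype_comm⟩
end

section
/- For integers n > 2 and odd s with 3 ≤ s ≤ 2n-3, (2n-1)!! - s!!·(2n-s)!! > (2n-3)!!, where m!! is the double factorial of the odd number m (with the convention that for even m it is the product of even numbers down to 2). -/
open scoped Nat

lemma aux_doubleFac : ∀ k b : ℕ, Odd b → 2 * k + 3 ≤ b →
    (2 * k + 3)‼ * b‼ ≤ 3 * (2 * k + b)‼ := by
  intro k
  induction k with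
  | zero =>
    intro b _ _
    simp [Nat.doubleFactorial]
  | succ k ih =>
    intro b hb hle
    have hb3 : 3 ≤ b := by omega
    have h1 : 2 * (k + 1) + 3 = (2 * k + 3) + 2 := by ring
    have h2 : 2 * (k + 1) + b = (2 * k + b) + 2 := by ring
    rw [h1, h2, Nat.doubleFactorial_add_two, Nat.doubleFactorial_add_two]
    have hih := ih b hb (by omega)
    calc ((2 * k + 3) + 2) * (2 * k + 3)‼ * b‼
        = ((2 * k + 3) + 2) * ((2 * k + 3)‼ * b‼) := by ring
      _ ≤ ((2 * k + b) + 2) * (3 * (2 * k + b)‼) :=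
          Nat.mul_le_mul (by omega) hih
      _ = 3 * (((2 * k + b) + 2) * (2 * k + b)‼) := by ring

/-- For `n > 2` and odd `s` with `3 ≤ s ≤ 2n-3`, we have
`(2n-1)!! - s!!(2n-s)!! > (2n-3)!!`, equivalently
`(2n-1)!! > (2n-3)!! + s!!(2n-s)!!`. -/
theorem odd_cut_inequality (n s : ℕ) (hn : 2 < n) (hodd : Odd s)
    (hs3 : 3 ≤ s) (hs : s ≤ 2 * n - 3) :
    (2 * n - 3)‼ + s‼ * (2 * n - s)‼ < (2 * n - 1)‼ := by
  set t := 2 * n - s with ht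
  have hsodd : s % 2 = 1 := Nat.odd_iff.mp hodd
  have htodd : Odd t := by rw [Nat.odd_iff]; omega
  have ht3 : 3 ≤ t := by omega
  have key : s‼ * t‼ ≤ 3 * (2 * n - 3)‼ := by
    rcases le_total s t with h | h
    · obtain ⟨k, hk⟩ : ∃ k, s = 2 * k + 3 := ⟨(s - 3) / 2, by omega⟩
      have := aux_doubleFac k t htodd (by omega)
      have heq : 2 * k + t = 2 * n - 3 := by omega
      rwa [← hk, heq] at this
    · obtain ⟨k, hk⟩ : ∃ k, t = 2 * k + 3 := ⟨(t - 3) / 2, by omega⟩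
      have := aux_doubleFac k s hodd (by omega)
      have heq : 2 * k + s = 2 * n - 3 := by omega
      rw [← hk, heq] at this
      rwa [Nat.mul_comm t‼ s‼] at this
  have h1 : 2 * n - 1 = (2 * n - 3) + 2 := by omega
  rw [h1, Nat.doubleFactorial_add_two]
  have hpos : 0 < (2 * n - 3)‼ := Nat.doubleFactorial_pos _
  have h5 : 5 ≤ (2 * n - 3) + 2 := by omega
  nlinarith [Nat.mul_le_mul h5 (le_refl ((2 * n - 3)‼))]
end
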